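/- arXiv:2406.08643 — 2 statements merged into one kernel-verified Lean document; each statement's English description precedes it below -/
import Mathlib

section
/- Let O be a Dedekind domain and M a finitely generated torsion-free O-module of rank n. If M ≅ O^{n-1} ⊕ 𝔞 and M ≅ O^{n-1} ⊕ 𝔟 for fractional ideals 𝔞, 𝔟, then 𝔞 and 𝔟 have the same class in the ideal class group of O. -/
/-!
Embed `O^k × 𝔞` in `F^(k+1)` as `O^k ⊕ 𝔞·e_{k+1}`. For an `O`-lattice `L` spanning `F^(k+1)`, the
`O`-module generated by the determinants of `(k+1)`-tuples from `L` is `𝔞` for this lattice, and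
it is multiplied by `det g` when `L` is moved by `g ∈ GL_{k+1}(F)`. An isomorphism
`O^k × 𝔞 ≃ O^k × 𝔟` extends, after localizing at `O ∖ {0}`, to such a `g` carrying one lattice
onto the other, so `𝔟 = (det g) 𝔞`.
-/

open Submodule
open scoped nonZeroDivisors

section Extension

variable {O F V : Type*} [CommRing O] [Field F] [Algebra O F] [IsFractionRing O F]
  [AddCommGroup V] [Module F V] [Module O V] [IsScalarTower O F V]

theorem isLocalizedModule_of_injective_of_span_range_eq_top {M : Type*} [AddCommGroup M]
    [Module O M] {f : M →ₗ[O] V} (hf : Function.Injective f)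
    (hspan : span F (Set.range f) = ⊤) : IsLocalizedModule O⁰ f := by
  have := isLocalizedModule_id O⁰ V F
  refine ⟨IsLocalizedModule.map_units (LinearMap.id : V →ₗ[O] V), fun y => ?_,
    fun h => ⟨1, by rw [hf h]⟩⟩
  have hy : y ∈ (LinearMap.range f).localized' F O⁰ LinearMap.id := by
    simp only [localized'_eq_span, LinearMap.id_coe, Set.image_id, LinearMap.coe_range, hspan]
    trivial
  obtain ⟨_, ⟨x, rfl⟩, s, rfl⟩ := hy
  exact ⟨(x, s), IsLocalizedModule.mk'_cancel' _ _ _⟩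

theorem exists_linearEquiv_comp_eq {M N : Type*} [AddCommGroup M] [Module O M]
    [AddCommGroup N] [Module O N] (e : M ≃ₗ[O] N) {i : M →ₗ[O] V} {j : N →ₗ[O] V}
    (hi : Function.Injective i) (hj : Function.Injective j)
    (hi_span : span F (Set.range i) = ⊤) (hj_span : span F (Set.range j) = ⊤) :
    ∃ g : V ≃ₗ[F] V, (g.toLinearMap.restrictScalars O) ∘ₗ i = j ∘ₗ e := by
  have := isLocalizedModule_of_injective_of_span_range_eq_top hi hi_span
  have := isLocalizedModule_of_injective_of_span_range_eq_top hj hj_span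
  exact ⟨IsLocalizedModule.mapEquiv O⁰ i j F e, by ext; simp⟩

end Extension

section DetSpan

variable {O F V ι : Type*} [CommRing O] [Field F] [Algebra O F]
  [AddCommGroup V] [Module F V] [Module O V] [IsScalarTower O F V] [Fintype ι] [DecidableEq ι]

def Module.Basis.detSpan (b : Module.Basis ι F V) (L : Submodule O V) : Submodule O F :=
  span O (Set.range fun v : ι → L => b.det fun i => (v i : V))

theorem Module.Basis.detSpan_map (b : Module.Basis ι F V) (L : Submodule O V) (g : V →ₗ[F] V) :
    b.detSpan (L.map (g.restrictScalars O)) = span O {LinearMap.det g} * b.detSpan L := by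
  have hsurj : Function.Surjective fun (v : ι → L) (i : ι) =>
      (⟨g (v i), mem_map_of_mem (v i).2⟩ : L.map (g.restrictScalars O)) := by
    intro w
    choose v hv using fun i => (w i).2
    exact ⟨fun i => ⟨v i, (hv i).1⟩, funext fun i => Subtype.ext (hv i).2⟩
  rw [detSpan, detSpan, span_mul_span, Set.singleton_mul, ← Set.range_comp, ← hsurj.range_comp]
  congr 2
  funext v
  exact b.det_comp g _

end DetSpan

section Embedding

variable {O F : Type*} [CommRing O] [Field F] [Algebra O F] (κ : Type*)

def piProdEmbedding (A : Submodule O F) : ((κ → O) × A) →ₗ[O] (κ ⊕ Unit → F) where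
  toFun p := Sum.elim (fun i => algebraMap O F (p.1 i)) (fun _ => (p.2 : F))
  map_add' p q := by funext j; rcases j with j | j <;> simp
  map_smul' r p := by funext j; rcases j with j | j <;> simp [Algebra.smul_def]

variable {κ} {A : Submodule O F}

@[simp]
theorem piProdEmbedding_apply_inl (p : (κ → O) × A) (j : κ) :
    piProdEmbedding κ A p (.inl j) = algebraMap O F (p.1 j) := rfl

@[simp]
theorem piProdEmbedding_apply_inr (p : (κ → O) × A) (u : Unit) :
    piProdEmbedding κ A p (.inr u) = p.2 := rfl

theorem piProdEmbedding_injective [IsFractionRing O F] :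
    Function.Injective (piProdEmbedding κ A) := by
  intro p q h
  refine Prod.ext (funext fun j => IsFractionRing.injective O F ?_) (Subtype.ext ?_)
  · simpa using congrFun h (.inl j)
  · simpa using congrFun h (.inr ())

variable [DecidableEq κ]

theorem piProdEmbedding_single (j : κ) :
    piProdEmbedding κ A (Pi.single j 1, 0) = Pi.single (.inl j) 1 := by
  funext x; rcases x with x | x <;> simp [Pi.single_apply]

theorem piProdEmbedding_inr (a : A) :
    piProdEmbedding κ A (0, a) = Pi.single (.inr ()) (a : F) := by
  funext x; rcases x with x | x <;> simp

theorem span_range_piProdEmbedding [Finite κ] (hA : A ≠ ⊥) :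
    span F (Set.range (piProdEmbedding κ A)) = ⊤ := by
  obtain ⟨a, haA, ha0⟩ := exists_mem_ne_zero_of_ne_bot hA
  rw [eq_top_iff, ← Module.Basis.span_eq (Pi.basisFun F (κ ⊕ Unit)), span_le]
  rintro _ ⟨j | u, rfl⟩
  · exact subset_span ⟨_, (piProdEmbedding_single j).trans (Pi.basisFun_apply F _ _).symm⟩
  · have : Pi.basisFun F (κ ⊕ Unit) (.inr u) = a⁻¹ • piProdEmbedding κ A (0, ⟨a, haA⟩) := by
      simp [piProdEmbedding_inr, ← Pi.single_smul, ha0]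
    rw [this]
    exact smul_mem _ _ (subset_span ⟨_, rfl⟩)

theorem detSpan_range_piProdEmbedding [Fintype κ] :
    (Pi.basisFun F (κ ⊕ Unit)).detSpan (LinearMap.range (piProdEmbedding κ A)) = A := by
  refine le_antisymm (span_le.mpr ?_) fun a ha => subset_span ?_
  · rintro _ ⟨v, rfl⟩
    have hv : ∀ i, (∀ j, (v i : κ ⊕ Unit → F) (.inl j) ∈ (algebraMap O F).range) ∧
        (v i : κ ⊕ Unit → F) (.inr ()) ∈ A := by
      intro i
      obtain ⟨p, hp⟩ := (v i).2
      exact hp ▸ ⟨fun j => ⟨p.1 j, rfl⟩, p.2.2⟩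
    simp only [SetLike.mem_coe, Pi.basisFun_det_apply, Matrix.det_apply]
    refine sum_mem fun σ _ => zsmul_mem ?_ _
    obtain ⟨o, ho⟩ : ∏ j, (v (σ (.inl j)) : κ ⊕ Unit → F) (.inl j) ∈ (algebraMap O F).range :=
      prod_mem fun j _ => (hv _).1 j
    simp only [Fintype.prod_sum_type, Matrix.of_apply, Fintype.prod_unique (ι := Unit)]
    rw [← ho, ← Algebra.smul_def]
    exact A.smul_mem o (hv _).2
  · let d : κ ⊕ Unit → F := Sum.elim 1 fun _ => a
    refine ⟨fun x => ⟨Pi.single x (d x), ?_⟩, ?_⟩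
    · rcases x with j | u
      · exact ⟨_, piProdEmbedding_single j⟩
      · exact ⟨_, piProdEmbedding_inr ⟨a, ha⟩⟩
    · have : Matrix.of (fun x => Pi.single x (d x)) = Matrix.diagonal d :=
        funext fun x => (Matrix.row_diagonal d x).symm
      simp only [Pi.basisFun_det_apply, this, Matrix.det_diagonal, Fintype.prod_sum_type, d]
      simp

end Embedding

theorem ClassGroup.mk_eq_mk_of_coe_eq_span_singleton_mul {O F : Type*} [CommRing O] [IsDomain O]
    [Field F] [Algebra O F] [IsFractionRing O F] {I J : (FractionalIdeal O⁰ F)ˣ} {d : F}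
    (hd : d ≠ 0) (h : ((J : FractionalIdeal O⁰ F) : Submodule O F) = span O {d} * I) :
    ClassGroup.mk F I = ClassGroup.mk F J := by
  have hJ : toPrincipalIdeal O F (Units.mk0 d hd) * I = J := by
    ext1
    rw [Units.val_mul, coe_toPrincipalIdeal, FractionalIdeal.coeToSubmodule_injective.eq_iff.symm,
      FractionalIdeal.coe_mul, FractionalIdeal.coe_spanSingleton, h, Units.val_mk0]
  have hprincipal : ClassGroup.mk F (toPrincipalIdeal O F (Units.mk0 d hd)) = 1 := by
    rw [ClassGroup.mk_eq_one_iff, coe_toPrincipalIdeal, FractionalIdeal.coe_spanSingleton]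
    exact ⟨⟨d, rfl⟩⟩
  rw [← hJ, map_mul, hprincipal, one_mul]

theorem steinitz_class_well_defined_general (O F : Type*) [CommRing O] [IsDomain O]
    [Field F] [Algebra O F] [IsFractionRing O F] (n : ℕ)
    (M : Type*) [AddCommGroup M] [Module O M]
    (a b : (FractionalIdeal (nonZeroDivisors O) F)ˣ)
    (ha : Nonempty (M ≃ₗ[O] ((Fin (n - 1) → O) × ((a : FractionalIdeal (nonZeroDivisors O) F) : Submodule O F))))
    (hb : Nonempty (M ≃ₗ[O] ((Fin (n - 1) → O) × ((b : FractionalIdeal (nonZeroDivisors O) F) : Submodule O F)))) :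
    ClassGroup.mk F a = ClassGroup.mk F b := by
  have hne_bot (I : (FractionalIdeal O⁰ F)ˣ) : (I : Submodule O F) ≠ ⊥ :=
    FractionalIdeal.coeToSubmodule_eq_bot.not.mpr I.ne_zero
  obtain ⟨g, hg⟩ := exists_linearEquiv_comp_eq (ha.some.symm ≪≫ₗ hb.some)
    piProdEmbedding_injective piProdEmbedding_injective
    (span_range_piProdEmbedding (hne_bot a)) (span_range_piProdEmbedding (hne_bot b))
  have hrange : LinearMap.range (piProdEmbedding (Fin (n - 1)) (b : Submodule O F)) =
      (LinearMap.range (piProdEmbedding _ (a : Submodule O F))).map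
        (g.toLinearMap.restrictScalars O) := by
    rw [← LinearMap.range_comp, hg, LinearMap.range_comp_of_range_eq_top _ (LinearEquiv.range _)]
  refine ClassGroup.mk_eq_mk_of_coe_eq_span_singleton_mul (LinearEquiv.isUnit_det' g).ne_zero ?_
  rw [← detSpan_range_piProdEmbedding (κ := Fin (n - 1)) (A := (b : Submodule O F)), hrange,
    Module.Basis.detSpan_map, detSpan_range_piProdEmbedding]

/-- Well-definedness of the Steinitz class: if a finitely generated torsion-free module `M`
of rank `n` over a Dedekind domain `O` satisfies `M ≃ O^(n-1) ⊕ 𝔞` and `M ≃ O^(n-1) ⊕ 𝔟`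
for nonzero fractional ideals `𝔞, 𝔟`, then `𝔞` and `𝔟` have the same ideal class. -/
theorem steinitz_class_well_defined (O F : Type*) [CommRing O] [IsDomain O] [IsDedekindDomain O]
    [Field F] [Algebra O F] [IsFractionRing O F] (n : ℕ)
    (M : Type*) [AddCommGroup M] [Module O M] [Module.Finite O M] [NoZeroSMulDivisors O M]
    (hrank : Module.finrank O M = n)
    (a b : (FractionalIdeal (nonZeroDivisors O) F)ˣ)
    (ha : Nonempty (M ≃ₗ[O] ((Fin (n - 1) → O) × ((a : FractionalIdeal (nonZeroDivisors O) F) : Submodule O F))))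
    (hb : Nonempty (M ≃ₗ[O] ((Fin (n - 1) → O) × ((b : FractionalIdeal (nonZeroDivisors O) F) : Submodule O F)))) :
    ClassGroup.mk F a = ClassGroup.mk F b :=
  steinitz_class_well_defined_general O F n M a b ha hb
end

section
/- Let γ ∈ O_K generate a principal prime ideal coprime to (n(n-1)), where n ≥ 2. Then the polynomial R(x) = x^n − γ^{n−1} x + γ is Eisenstein at any prime above (γ) in the field L = K(ζ_{n−1}, n^{1/(n−1)}), and in particular R is irreducible over L. -/
/-!
Since `γ` lies in every prime `Q` above `(γ)` and all middle coefficients of `R` are multiples of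
`γ`, Eisenstein's criterion only needs `γ ∉ Q²`, i.e. that `(γ)` is unramified at `Q`. Split
`L / K` as `K ⊆ M = K(ζ) ⊆ L` and let `P = Q ∩ 𝓞 M`. A prime ramified over `𝔭` divides the
different, which contains `f'(x)` whenever `x` generates the extension and `f(x) = 0`. If `(γ)`
ramified at `P`, then `f = X^(n-1) - 1` and `x = ζ` would give `(n - 1) ζ^(n-2) ∈ P`, so
`n - 1 ∈ P`; otherwise `Q² ∣ P 𝓞_L`, and `f = X^(n-1) - n`, `x = μ` give `(n - 1) μ^(n-2) ∈ Q`,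
so `n - 1 ∈ Q` or `n = μ^(n-1) ∈ Q`. Each contradicts `(γ) + (n(n-1)) = 1`.
-/

open NumberField Polynomial IntermediateField

lemma Ideal.notMem_of_isCoprime_span_singleton {A : Type*} [CommSemiring A] {I : Ideal A}
    (hI : I ≠ ⊤) {a : A} (h : IsCoprime I (Ideal.span {a})) : a ∉ I := fun ha =>
  hI (by simpa [sup_eq_left.mpr ((Ideal.span_singleton_le_iff_mem I).mpr ha)] using
    Ideal.isCoprime_iff_sup_eq.mp h)

lemma Ideal.natCast_notMem_of_comap_eq {A R : Type*} [CommRing A] [CommRing R] [Algebra A R]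
    {I : Ideal A} {J : Ideal R} (hJ : J.comap (algebraMap A R) = I) {k : ℕ} (hk : (k : A) ∉ I) :
    (k : R) ∉ J := by
  rwa [← map_natCast (algebraMap A R), ← Ideal.mem_comap, hJ]

lemma algebra_adjoin_gen_eq_top {K L : Type*} [Field K] [Field L] [Algebra K L] {α : L}
    (hα : IsIntegral K α) : Algebra.adjoin K {AdjoinSimple.gen K α} = ⊤ := by
  rw [← adjoin.powerBasis_gen hα]
  exact (adjoin.powerBasis hα).adjoin_gen_eq_top

lemma algebra_adjoin_adjoin_simple_eq_top {K L : Type*} [Field K] [Field L] [Algebra K L]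
    {α β : L} (h : Algebra.adjoin K {α, β} = ⊤) : Algebra.adjoin K⟮α⟯ {β} = ⊤ := by
  apply Subalgebra.restrictScalars_injective K
  rw [Subalgebra.restrictScalars_top (R := K), eq_top_iff, ← h]
  refine Algebra.adjoin_le (Set.insert_subset_iff.mpr ⟨?_, by simp [Algebra.subset_adjoin]⟩)
  rw [← AdjoinSimple.algebraMap_gen K α]
  exact Subalgebra.algebraMap_mem (Algebra.adjoin K⟮α⟯ {β}) _

section Different

variable {K M : Type*} [Field K] [NumberField K] [Field M] [NumberField M] [Algebra K M]
  {p : Ideal (𝓞 K)} [p.IsMaximal] {P : Ideal (𝓞 M)}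

lemma aeval_derivative_mem_of_sq_dvd_map (hp : p ≠ ⊥)
    (hP : P ^ 2 ∣ p.map (algebraMap (𝓞 K) (𝓞 M))) {x : 𝓞 M}
    (hx : Algebra.adjoin K {(x : M)} = ⊤) {F : (𝓞 K)[X]} (hF : aeval x F = 0) :
    aeval x (derivative F) ∈ P := by
  have hPdiff : P ∣ differentIdeal (𝓞 K) (𝓞 M) := by
    simpa using pow_sub_one_dvd_differentIdeal (𝓞 K) P 2 hp hP
  obtain ⟨G, rfl⟩ := minpoly.isIntegrallyClosed_dvd (IsIntegralClosure.isIntegral (𝓞 K) M x) hF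
  have hmin : aeval x (derivative (minpoly (𝓞 K) x)) ∈ P :=
    Ideal.le_of_dvd hPdiff (aeval_derivative_mem_differentIdeal (𝓞 K) K M x hx)
  rw [derivative_mul, map_add, map_mul, map_mul, minpoly.aeval, zero_mul, add_zero]
  exact P.mul_mem_right _ hmin

lemma not_sq_dvd_map_of_pow_eq_natCast [P.IsPrime] (hp : p ≠ ⊥) {x : M}
    (hx : Algebra.adjoin K {x} = ⊤) {m k : ℕ} (hm : m ≠ 0) (hxk : x ^ m = k)
    (hmP : (m : 𝓞 M) ∉ P) (hkP : (k : 𝓞 M) ∉ P) :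
    ¬ P ^ 2 ∣ p.map (algebraMap (𝓞 K) (𝓞 M)) := by
  intro hP
  have hxint : IsIntegral ℤ x := ⟨X ^ m - C (k : ℤ), monic_X_pow_sub_C _ hm, by simp [hxk]⟩
  obtain ⟨y, rfl⟩ : ∃ y : 𝓞 M, (y : M) = x := ⟨⟨x, hxint⟩, rfl⟩
  have hyk : y ^ m = k := RingOfIntegers.coe_injective (by simpa using hxk)
  have hy := aeval_derivative_mem_of_sq_dvd_map hp hP hx (F := X ^ m - (k : (𝓞 K)[X]))
    (by simp [hyk])
  simp only [derivative_sub, derivative_X_pow, derivative_natCast, sub_zero, map_mul,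
    map_natCast, map_pow, aeval_X] at hy
  rcases Ideal.IsPrime.mem_or_mem ‹_› hy with h | h
  · exact hmP h
  · apply hkP
    rw [← hyk, ← pow_sub_one_mul hm]
    exact P.mul_mem_right y h

end Different

lemma sq_dvd_map_of_algebraMap_mem_sq {B C : Type*} [CommRing B] [IsDedekindDomain B] [CommRing C]
    [IsDedekindDomain C] [Algebra B C] {P : Ideal B} {Q : Ideal C} [Q.IsPrime] (hQ : Q ≠ ⊥)
    (hQP : Q.comap (algebraMap B C) = P) {b : B} (hbP : b ∈ P) (hbP2 : b ∉ P ^ 2)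
    (hbQ2 : algebraMap B C b ∈ Q ^ 2) : Q ^ 2 ∣ P.map (algebraMap B C) := by
  obtain ⟨I, hI⟩ : P ∣ Ideal.span {b} := Ideal.dvd_span_singleton.mpr hbP
  have hQI : ¬ Q ∣ I.map (algebraMap B C) := by
    intro hQI
    refine hbP2 (Ideal.dvd_span_singleton.mp ?_)
    rw [hI, sq]
    refine mul_dvd_mul_left P (Ideal.dvd_iff_le.mpr ?_)
    rw [← hQP, ← Ideal.map_le_iff_le_comap]
    exact Ideal.le_of_dvd hQI
  have hQ2 : Q ^ 2 ∣ P.map (algebraMap B C) * I.map (algebraMap B C) := by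
    rw [← Ideal.map_mul, ← hI, Ideal.map_span, Set.image_singleton]
    exact Ideal.dvd_span_singleton.mpr hbQ2
  exact (Ideal.prime_of_isPrime hQ ‹_›).pow_dvd_of_dvd_mul_right 2 hQI hQ2

lemma monic_X_pow_sub_C_mul_X_add_C {R : Type*} [CommRing R] {n : ℕ} (hn : 2 ≤ n) (a b : R) :
    (X ^ n - C a * X + C b).Monic := by
  monicity!
  simp [show 1 ≤ n by omega, show ¬n ≤ 1 by omega]

lemma natDegree_X_pow_sub_C_mul_X_add_C {R : Type*} [CommRing R] [Nontrivial R] {n : ℕ}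
    (hn : 2 ≤ n) (a b : R) : (X ^ n - C a * X + C b).natDegree = n := by
  compute_degree! <;> first | omega | simp [show n ≠ 0 by omega, show n ≠ 1 by omega]

lemma isEisensteinAt_X_pow_sub_C_mul_X_add_C {R : Type*} [CommRing R] {𝓟 : Ideal R} {n : ℕ}
    (hn : 2 ≤ n) {g : R} (hg : g ∈ 𝓟) (hg2 : g ∉ 𝓟 ^ 2) :
    (X ^ n - C (g ^ (n - 1)) * X + C g).IsEisensteinAt 𝓟 := by
  have : Nontrivial R := by
    by_contra h
    rw [not_nontrivial_iff_subsingleton] at h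
    exact hg2 (Subsingleton.elim g 0 ▸ zero_mem _)
  refine ⟨?_, fun {i} hi => ?_, ?_⟩
  · rw [(monic_X_pow_sub_C_mul_X_add_C hn _ _).leadingCoeff]
    exact fun h1 => hg2 (by simp [(Ideal.eq_top_iff_one _).mpr h1, Ideal.top_pow])
  · rw [natDegree_X_pow_sub_C_mul_X_add_C hn] at hi
    simp only [coeff_add, coeff_sub, coeff_X_pow, coeff_C_mul, coeff_X, coeff_C, if_neg hi.ne]
    split_ifs with h1
    · omega
    · subst h1
      simpa using 𝓟.pow_mem_of_mem hg _ (by omega)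
    · simp_all
    · simp
  · simpa [coeff_X, show 0 ≠ n by omega] using hg2

lemma algebraMap_notMem_sq_of_comap_eq_span (K L : Type*) [Field K] [NumberField K] [Field L]
    [NumberField L] [Algebra K L] (n : ℕ) (hn : 2 ≤ n) (γ : 𝓞 K)
    (hprime : Prime (Ideal.span {γ} : Ideal (𝓞 K)))
    (hcop : IsCoprime (Ideal.span {γ} : Ideal (𝓞 K))
      (Ideal.span {((n : 𝓞 K) * ((n : 𝓞 K) - 1))}))
    (ζ μ : L) (hζ : IsPrimitiveRoot ζ (n - 1)) (hμ : μ ^ (n - 1) = (n : L))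
    (hL : Algebra.adjoin K ({ζ, μ} : Set L) = ⊤) (Q : Ideal (𝓞 L)) [Q.IsPrime]
    (hQγ : Q.comap (algebraMap (𝓞 K) (𝓞 L)) = Ideal.span {γ}) :
    algebraMap (𝓞 K) (𝓞 L) γ ∉ Q ^ 2 := by
  have hn1 : n - 1 ≠ 0 := by omega
  have hpbot : Ideal.span {γ} ≠ ⊥ := hprime.ne_zero
  have : (Ideal.span {γ}).IsMaximal := (Ideal.isPrime_of_prime hprime).isMaximal hpbot
  have hnn1γ :=
    Ideal.notMem_of_isCoprime_span_singleton (Ideal.isPrime_of_prime hprime).ne_top hcop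
  have hn1γ : ((n - 1 : ℕ) : 𝓞 K) ∉ Ideal.span {γ} := fun h =>
    hnn1γ (by rw [← Nat.cast_pred (by omega)]; exact Ideal.mul_mem_left _ _ h)
  have hnγ : (n : 𝓞 K) ∉ Ideal.span {γ} := fun h => hnn1γ (Ideal.mul_mem_right _ _ h)
  set M := K⟮ζ⟯
  set P := Q.comap (algebraMap (𝓞 M) (𝓞 L))
  have hPγ : P.comap (algebraMap (𝓞 K) (𝓞 M)) = Ideal.span {γ} := by
    rw [Ideal.comap_comap, ← IsScalarTower.algebraMap_eq, hQγ]
  have : P.LiesOver (Ideal.span {γ}) := ⟨hPγ.symm⟩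
  have hPbot : P ≠ ⊥ := Ideal.ne_bot_of_liesOver_of_ne_bot hpbot P
  have hPmax : P.IsMaximal := Ideal.IsPrime.isMaximal inferInstance hPbot
  intro hγQ
  by_cases hγP2 : algebraMap (𝓞 K) (𝓞 M) γ ∈ P ^ 2
  · have hζM : AdjoinSimple.gen K ζ ^ (n - 1) = ((1 : ℕ) : M) := by
      apply (algebraMap M L).injective
      simp [hζ.pow_eq_one]
    exact not_sq_dvd_map_of_pow_eq_natCast hpbot
      (algebra_adjoin_gen_eq_top (hζ.isIntegral (by omega)).tower_top) hn1 hζM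
      (Ideal.natCast_notMem_of_comap_eq hPγ hn1γ)
      (by simpa using P.ne_top_iff_one.mp hPmax.ne_top)
      (by simpa [Ideal.map_span] using Ideal.dvd_span_singleton.mpr hγP2)
  · refine not_sq_dvd_map_of_pow_eq_natCast hPbot (algebra_adjoin_adjoin_simple_eq_top hL) hn1 hμ
      (Ideal.natCast_notMem_of_comap_eq hQγ hn1γ) (Ideal.natCast_notMem_of_comap_eq hQγ hnγ) ?_
    refine sq_dvd_map_of_algebraMap_mem_sq (Ideal.ne_bot_of_liesOver_of_ne_bot hPbot Q) rfl ?_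
      hγP2 (by rwa [← IsScalarTower.algebraMap_apply])
    rw [← Ideal.mem_comap, hPγ]
    exact Ideal.mem_span_singleton_self γ

/-- If `γ ∈ 𝓞 K` generates a principal prime ideal coprime to `(n(n-1))` (`n ≥ 2`),
then `R(x) = x^n − γ^(n−1) x + γ` is Eisenstein at every prime of
`L = K(ζ_(n−1), n^(1/(n−1)))` lying above `(γ)`, and in particular `R` is
irreducible over `L`. -/
theorem eisenstein_above_gamma (K L : Type*) [Field K] [NumberField K] [Field L] [NumberField L]
    [Algebra K L] (n : ℕ) (hn : 2 ≤ n) (γ : 𝓞 K)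
    (hprime : Prime (Ideal.span {γ} : Ideal (𝓞 K)))
    (hcop : IsCoprime (Ideal.span {γ} : Ideal (𝓞 K))
      (Ideal.span {((n : 𝓞 K) * ((n : 𝓞 K) - 1))}))
    (ζ μ : L) (hζ : IsPrimitiveRoot ζ (n - 1)) (hμ : μ ^ (n - 1) = (n : L))
    (hL : Algebra.adjoin K ({ζ, μ} : Set L) = ⊤) :
    (∀ Q : Ideal (𝓞 L), Q.IsPrime →
        Q.comap (algebraMap (𝓞 K) (𝓞 L)) = Ideal.span {γ} →
        ((X ^ n - C (γ ^ (n - 1)) * X + C γ : Polynomial (𝓞 K)).map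
          (algebraMap (𝓞 K) (𝓞 L))).IsEisensteinAt Q) ∧
      Irreducible
        (X ^ n - C ((algebraMap K L (γ : K)) ^ (n - 1)) * X + C (algebraMap K L (γ : K)) :
          Polynomial L) := by
  set g := algebraMap (𝓞 K) (𝓞 L) γ
  have hmap : (X ^ n - C (γ ^ (n - 1)) * X + C γ).map (algebraMap (𝓞 K) (𝓞 L)) =
      X ^ n - C (g ^ (n - 1)) * X + C g := by
    simp [g]
  have heis : ∀ Q : Ideal (𝓞 L), Q.IsPrime → Q.comap (algebraMap (𝓞 K) (𝓞 L)) = Ideal.span {γ} →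
      (X ^ n - C (g ^ (n - 1)) * X + C g).IsEisensteinAt Q := fun Q _ hQγ =>
    isEisensteinAt_X_pow_sub_C_mul_X_add_C hn
      (by rw [← Ideal.mem_comap, hQγ]; exact Ideal.mem_span_singleton_self γ)
      (algebraMap_notMem_sq_of_comap_eq_span K L n hn γ hprime hcop ζ μ hζ hμ hL Q hQγ)
  refine ⟨fun Q hQ hQγ => hmap ▸ heis Q hQ hQγ, ?_⟩
  have := Ideal.isPrime_of_prime hprime
  obtain ⟨Q, -, hQ, hQγ⟩ := Ideal.exists_ideal_over_prime_of_isIntegral (S := 𝓞 L)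
    (Ideal.span {γ}) ⊥ (by simp [← RingHom.ker_eq_comap_bot])
  have hmonic := monic_X_pow_sub_C_mul_X_add_C hn (g ^ (n - 1)) g
  have hirr := (heis Q hQ hQγ).irreducible hQ hmonic.isPrimitive
    (by rw [natDegree_X_pow_sub_C_mul_X_add_C hn]; omega)
  convert hmonic.irreducible_iff_irreducible_map_fraction_map (K := L) |>.mp hirr using 1
  simp [g, ← IsScalarTower.algebraMap_apply]
end
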